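/- Let α ≥ 0 and β > −1 be real numbers with α ≥ β. Then there exists an integer k₀ ≥ 2 such that for all k ≥ k₀, if x* denotes the largest zero in (−1,1) of the Jacobi polynomial P_{k−1}^{(α+1,β+1)}, then P̂_k^{(α,β)}(x*) = min{ P̂_k^{(α,β)}(u) : 0 ≤ u ≤ 1 }. -/

import Mathlib

/-- Generalized binomial coefficient `C(a, j) = a(a-1)⋯(a-j+1)/j!` for real `a`. -/
noncomputable def genBinom (a : ℝ) (j : ℕ) : ℝ :=
  (∏ i ∈ Finset.range j, (a - i)) / (Nat.factorial j)

/-- The Jacobi polynomial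
`P_k^{(α,β)}(x) = Σ_{m=0}^k C(k+α, k-m)·C(k+β, m)·((x-1)/2)^m·((x+1)/2)^{k-m}`. -/
noncomputable def jacobiP (α β : ℝ) (k : ℕ) (x : ℝ) : ℝ :=
  ∑ m ∈ Finset.range (k + 1),
    genBinom ((k : ℝ) + α) (k - m) * genBinom ((k : ℝ) + β) m *
      ((x - 1) / 2) ^ m * ((x + 1) / 2) ^ (k - m)

/-- The normalized Jacobi polynomial `P̂_k^{(α,β)} = P_k^{(α,β)} / C(k+α, k)`,
so that `P̂_k^{(α,β)}(1) = 1`. -/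
noncomputable def jacobiPN (α β : ℝ) (k : ℕ) (x : ℝ) : ℝ :=
  jacobiP α β k x / genBinom ((k : ℝ) + α) k

/-!
`P = P_k^{(α,β)}` solves `(1 - x²) P'' + (β - α - (α + β + 2) x) P' + μ P = 0` with
`μ = k (k + α + β + 1)`, and `P'` is a positive multiple of `P_{k-1}^{(α+1,β+1)}`. Hence `x*` is the
last critical point of `P`, `P` increases on `[x*, 1]`, and `P(x*) ≤ 0` since `P''(x*) ≥ 0`.
Sonin's function `μ P² + (1 - x²) P'²` has derivative `2 P'² ((α + β + 1) x + α - β) ≥ 0` on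
`[0, 1]`, so `|P| ≤ |P(x*)|` on `[0, x*]`. Finally `x* > 0` for large `k`: by Picone's identity, a
solution of the Jacobi equation with large `μ` must vanish on any interval of length `π / ω` on
which it is compared with `sin (ω (x - x₀))`, and `[1/4, 1/2]` contains such an interval.
-/

section Algebra

open Finset

@[simp]
lemma genBinom_zero (a : ℝ) : genBinom a 0 = 1 := by simp [genBinom]

lemma genBinom_succ_mul (a : ℝ) (j : ℕ) :
    genBinom a (j + 1) * ((j : ℝ) + 1) = genBinom a j * (a - j) := by
  unfold genBinom
  rw [prod_range_succ, Nat.factorial_succ]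
  push_cast
  field_simp

lemma genBinom_pos {a : ℝ} {j : ℕ} (h : (j : ℝ) - 1 < a) : 0 < genBinom a j := by
  refine div_pos (prod_pos fun i hi => ?_) (by positivity)
  have : (i : ℝ) + 1 ≤ j := by exact_mod_cast mem_range.mp hi
  linarith

lemma jacobiP_one (α β : ℝ) (k : ℕ) : jacobiP α β k 1 = genBinom (k + α) k := by
  rw [jacobiP, sum_eq_single 0 (fun m _ hm => by simp [hm]) (by simp)]
  simp

lemma natCast_mul_pow_eq {R : Type*} [CommSemiring R] (x : R) (m : ℕ) :
    (m : R) * x ^ m = x * (m * x ^ (m - 1)) := by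
  cases m
  · simp
  · simp only [Nat.add_sub_cancel, pow_succ]
    ring

/-- Homogeneous form of `jacobiP` in `u = (x - 1) / 2`, `v = (x + 1) / 2`, with the upper
arguments `a, b` of the binomials decoupled from the degree `N`: at fixed `a, b` the
differentiation and contiguity relations become identities between these sums. -/
noncomputable def jacobiHom (a b : ℝ) (N : ℕ) (u v : ℝ) : ℝ :=
  ∑ j ∈ range (N + 1), genBinom a (N - j) * genBinom b j * u ^ j * v ^ (N - j)

lemma jacobiP_eq_jacobiHom (α β : ℝ) (k : ℕ) (x : ℝ) :
    jacobiP α β k x = jacobiHom (k + α) (k + β) k ((x - 1) / 2) ((x + 1) / 2) := rfl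

section PartialDerivatives

-- The left-hand sides are `∂_u` and `∂_v` of `jacobiHom a b (N + 1) u v`, taken termwise.

variable (a b u v : ℝ) (N : ℕ)

lemma sum_partial_u_jacobiHom :
    ∑ j ∈ range (N + 2), (j : ℝ) * genBinom a (N + 1 - j) * genBinom b j * u ^ (j - 1) *
        v ^ (N + 1 - j) =
      ∑ j ∈ range (N + 1), (b - j) * genBinom a (N - j) * genBinom b j * u ^ j * v ^ (N - j) := by
  rw [sum_range_succ']
  simp only [CharP.cast_eq_zero, zero_mul, add_zero]
  refine sum_congr rfl fun j _ => ?_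
  rw [show N + 1 - (j + 1) = N - j by omega, Nat.add_sub_cancel]
  push_cast
  linear_combination genBinom a (N - j) * u ^ j * v ^ (N - j) * genBinom_succ_mul b j

lemma sum_partial_v_jacobiHom :
    ∑ j ∈ range (N + 2), ((N + 1 - j : ℕ) : ℝ) * genBinom a (N + 1 - j) * genBinom b j * u ^ j *
        v ^ (N - j) =
      ∑ j ∈ range (N + 1), (a - (N - j : ℕ)) * genBinom a (N - j) * genBinom b j * u ^ j *
        v ^ (N - j) := by
  rw [sum_range_succ]
  simp only [Nat.sub_self, CharP.cast_eq_zero, zero_mul, add_zero]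
  refine sum_congr rfl fun j hj => ?_
  have hjN : N + 1 - j = N - j + 1 := by have := mem_range.mp hj; omega
  rw [hjN]
  push_cast
  linear_combination genBinom b j * u ^ j * v ^ (N - j) * genBinom_succ_mul a (N - j)

end PartialDerivatives

lemma hasDerivAt_jacobiHom (a b : ℝ) (N : ℕ) (x : ℝ) :
    HasDerivAt (fun t => jacobiHom a b (N + 1) ((t - 1) / 2) ((t + 1) / 2))
      ((a + b - N) / 2 * jacobiHom a b N ((x - 1) / 2) ((x + 1) / 2)) x := by
  set u := (x - 1) / 2
  set v := (x + 1) / 2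
  have hu : HasDerivAt (fun t : ℝ => (t - 1) / 2) (1 / 2) x :=
    ((hasDerivAt_id x).sub_const 1).div_const 2
  have hv : HasDerivAt (fun t : ℝ => (t + 1) / 2) (1 / 2) x :=
    ((hasDerivAt_id x).add_const 1).div_const 2
  have hterms := HasDerivAt.fun_sum (u := range (N + 2)) fun j _ =>
    ((hu.pow j).const_mul (genBinom a (N + 1 - j) * genBinom b j)).mul (hv.pow (N + 1 - j))
  refine hterms.congr_deriv ?_
  simp only [Pi.pow_apply]
  have hpartials := congrArg₂ (· + ·) (sum_partial_u_jacobiHom a b u v N)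
    (sum_partial_v_jacobiHom a b u v N)
  simp only [← sum_add_distrib] at hpartials
  calc _ = (∑ j ∈ range (N + 2), ((j : ℝ) * genBinom a (N + 1 - j) * genBinom b j *
              u ^ (j - 1) * v ^ (N + 1 - j) + ((N + 1 - j : ℕ) : ℝ) * genBinom a (N + 1 - j) *
              genBinom b j * u ^ j * v ^ (N - j))) / 2 := by
        rw [sum_div]
        refine sum_congr rfl fun j _ => ?_
        rw [show N + 1 - j - 1 = N - j by omega]
        ring
    _ = _ := by
        rw [hpartials, jacobiHom, mul_sum, sum_div]
        refine sum_congr rfl fun j hj => ?_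
        rw [Nat.cast_sub (by have := mem_range.mp hj; omega)]
        ring

lemma hasDerivAt_jacobiP (α β : ℝ) (n : ℕ) (x : ℝ) :
    HasDerivAt (jacobiP α β (n + 1))
      ((n + α + β + 2) / 2 * jacobiP (α + 1) (β + 1) n x) x := by
  have h := hasDerivAt_jacobiHom ((n + 1 : ℕ) + α) ((n + 1 : ℕ) + β) n x
  refine h.congr_deriv ?_
  rw [jacobiP_eq_jacobiHom]
  push_cast
  ring_nf

lemma sum_euler_jacobiHom (a b u v s t : ℝ) (N : ℕ) :
    ∑ j ∈ range (N + 2), (j * s + ((N + 1 - j : ℕ) : ℝ) * t) * genBinom a (N + 1 - j) *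
        genBinom b j * u ^ j * v ^ (N + 1 - j) =
      ∑ j ∈ range (N + 1), ((b - j) * s * u + (a - (N - j : ℕ)) * t * v) * genBinom a (N - j) *
        genBinom b j * u ^ j * v ^ (N - j) := by
  have hu := congrArg (s * u * ·) (sum_partial_u_jacobiHom a b u v N)
  have hv := congrArg (t * v * ·) (sum_partial_v_jacobiHom a b u v N)
  simp only [mul_sum] at hu hv
  calc _ = ∑ j ∈ range (N + 2),
          (s * u * (j * genBinom a (N + 1 - j) * genBinom b j * u ^ (j - 1) * v ^ (N + 1 - j)) +
          t * v * ((N + 1 - j : ℕ) * genBinom a (N + 1 - j) * genBinom b j * u ^ j *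
            v ^ (N - j))) := by
        refine sum_congr rfl fun j _ => ?_
        have hv_pow := natCast_mul_pow_eq v (N + 1 - j)
        rw [show N + 1 - j - 1 = N - j by omega] at hv_pow
        linear_combination genBinom a (N + 1 - j) * genBinom b j *
          (s * v ^ (N + 1 - j) * natCast_mul_pow_eq u j + t * u ^ j * hv_pow)
    _ = _ := by
        rw [sum_add_distrib, hu, hv, ← sum_add_distrib]
        exact sum_congr rfl fun j _ => by ring

lemma jacobiHom_recurrence (a b u v : ℝ) (n : ℕ) :
    (n + 2) * jacobiHom a b (n + 2) u v =
      (a + b - n) * u * v * jacobiHom a b n u v +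
        ((b - n - 1) * u + (a - n - 1) * v) * jacobiHom a b (n + 1) u v := by
  have euler := sum_euler_jacobiHom a b u v 1 1 (n + 1)
  have lower := sum_euler_jacobiHom a b u v v u n
  have cast_sub {m j : ℕ} (hj : j ∈ range (m + 1)) : ((m - j : ℕ) : ℝ) = m - j :=
    Nat.cast_sub (Nat.lt_succ_iff.mp (mem_range.mp hj))
  calc _ = ∑ j ∈ range (n + 1 + 2), (j * 1 + ((n + 1 + 1 - j : ℕ) : ℝ) * 1) *
          genBinom a (n + 1 + 1 - j) * genBinom b j * u ^ j * v ^ (n + 1 + 1 - j) := by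
        rw [jacobiHom, mul_sum]
        refine sum_congr rfl fun j hj => ?_
        rw [cast_sub hj]
        push_cast
        ring
    _ = ((b - n - 1) * u + (a - n - 1) * v) * jacobiHom a b (n + 1) u v +
          ∑ j ∈ range (n + 2), (j * v + ((n + 1 - j : ℕ) : ℝ) * u) * genBinom a (n + 1 - j) *
            genBinom b j * u ^ j * v ^ (n + 1 - j) := by
        rw [euler, jacobiHom, mul_sum, ← sum_add_distrib]
        refine sum_congr rfl fun j hj => ?_
        rw [cast_sub hj]
        push_cast
        ring
    _ = _ := by
        rw [lower, add_comm, jacobiHom.eq_1 a b n, mul_sum]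
        congr 1
        refine sum_congr rfl fun j hj => ?_
        rw [cast_sub hj]
        ring

end Algebra

structure IsJacobiSolution (α β μ : ℝ) (f f' f'' : ℝ → ℝ) : Prop where
  hasDerivAt : ∀ x, HasDerivAt f (f' x) x
  hasDerivAt_deriv : ∀ x, HasDerivAt f' (f'' x) x
  ode : ∀ x, (1 - x ^ 2) * f'' x + (β - α - (α + β + 2) * x) * f' x + μ * f x = 0

lemma isJacobiSolution_jacobiP (α β : ℝ) (n : ℕ) :
    IsJacobiSolution α β ((n + 2) * (n + α + β + 3)) (jacobiP α β (n + 2))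
      (fun x => (n + α + β + 3) / 2 * jacobiP (α + 1) (β + 1) (n + 1) x)
      (fun x => (n + α + β + 3) / 2 * ((n + α + β + 4) / 2 * jacobiP (α + 2) (β + 2) n x)) where
  hasDerivAt x := by
    convert hasDerivAt_jacobiP α β (n + 1) x using 2
    push_cast
    ring
  hasDerivAt_deriv x := by
    refine ((hasDerivAt_jacobiP (α + 1) (β + 1) n x).const_mul _).congr_deriv ?_
    rw [show α + 1 + 1 = α + 2 by ring, show β + 1 + 1 = β + 2 by ring]
    ring
  ode x := by
    have h := jacobiHom_recurrence ((n + 2 : ℕ) + α) ((n + 2 : ℕ) + β) ((x - 1) / 2) ((x + 1) / 2) n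
    simp only [jacobiP_eq_jacobiHom]
    rw [show ((n + 1 : ℕ) : ℝ) + (α + 1) = (n + 2 : ℕ) + α by push_cast; ring,
      show ((n + 1 : ℕ) : ℝ) + (β + 1) = (n + 2 : ℕ) + β by push_cast; ring,
      show (n : ℝ) + (α + 2) = (n + 2 : ℕ) + α by push_cast; ring,
      show (n : ℝ) + (β + 2) = (n + 2 : ℕ) + β by push_cast; ring]
    push_cast at h ⊢
    linear_combination (n + α + β + 3) * h

open Set Real

lemma HasDerivAt.nonneg_of_le_right {g : ℝ → ℝ} {g' x b : ℝ} (hg : HasDerivAt g g' x)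
    (hxb : x < b) (hle : ∀ y ∈ Ioo x b, g x ≤ g y) : 0 ≤ g' := by
  refine ge_of_tendsto (hasDerivAt_iff_tendsto_slope_left_right.mp hg).2 ?_
  filter_upwards [Ioo_mem_nhdsGT hxb] with y hy
  rw [slope_def_field]
  exact div_nonneg (sub_nonneg.mpr (hle y hy)) (sub_nonneg.mpr hy.1.le)

lemma IsPreconnected.pos_of_ne_zero {s : Set ℝ} {g : ℝ → ℝ} {a : ℝ} (hs : IsPreconnected s)
    (hg : ContinuousOn g s) (hne : ∀ x ∈ s, g x ≠ 0) (ha : a ∈ s) (hga : 0 < g a) :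
    ∀ x ∈ s, 0 < g x := by
  intro x hx
  by_contra! hgx
  obtain ⟨z, hz, hgz⟩ := hs.intermediate_value hx ha hg ⟨hgx, hga.le⟩
  exact hne z hz hgz

lemma pos_of_isGreatest_zeros {g : ℝ → ℝ} {a b x : ℝ} (hg : Continuous g) (hb : 0 < g b)
    (hx : IsGreatest {y | y ∈ Ioo a b ∧ g y = 0} x) : ∀ y ∈ Ioo x b, 0 < g y := by
  have hne : ∀ y ∈ Ioc x b, g y ≠ 0 := fun y hy hgy => by
    rcases hy.2.eq_or_lt with rfl | hyb
    · exact hb.ne' hgy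
    · exact (hx.2 ⟨⟨hx.1.1.1.trans hy.1, hyb⟩, hgy⟩).not_gt hy.1
  exact fun y hy => isPreconnected_Ioc.pos_of_ne_zero hg.continuousOn hne
    ⟨hx.1.1.2, le_rfl⟩ hb y (Ioo_subset_Ioc_self hy)

namespace IsJacobiSolution

variable {α β μ : ℝ} {f f' f'' : ℝ → ℝ}

lemma monotoneOn_sonin (hf : IsJacobiSolution α β μ f f' f'') (hαβ : β ≤ α)
    (hαβ₁ : 0 ≤ α + β + 1) :
    MonotoneOn (fun x => μ * f x ^ 2 + (1 - x ^ 2) * f' x ^ 2) (Ici 0) := by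
  have hderiv (x : ℝ) : HasDerivAt (fun x => μ * f x ^ 2 + (1 - x ^ 2) * f' x ^ 2)
      (2 * f' x ^ 2 * ((α + β + 1) * x + (α - β))) x := by
    have h := (((hf.hasDerivAt x).pow 2).const_mul μ).add
      (((hasDerivAt_pow 2 x).const_sub 1).mul ((hf.hasDerivAt_deriv x).pow 2))
    refine h.congr_deriv ?_
    simp only [Pi.pow_apply]
    norm_num
    linear_combination (2 * f' x) * hf.ode x
  refine monotoneOn_of_hasDerivWithinAt_nonneg (convex_Ici 0)
    (fun x _ => (hderiv x).continuousAt.continuousWithinAt)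
    (fun x _ => (hderiv x).hasDerivWithinAt) fun x hx => ?_
  rw [interior_Ici, mem_Ioi] at hx
  have : 0 ≤ (α + β + 1) * x + (α - β) := by nlinarith
  positivity

lemma nonpos_of_deriv_eq_zero (hf : IsJacobiSolution α β μ f f' f'') (hμ : 0 < μ) {x b : ℝ}
    (hx : x ^ 2 ≤ 1) (hxb : x < b) (hcrit : f' x = 0) (hpos : ∀ y ∈ Ioo x b, 0 < f' y) :
    f x ≤ 0 := by
  have hf'' : 0 ≤ f'' x :=
    (hf.hasDerivAt_deriv x).nonneg_of_le_right hxb fun y hy => hcrit ▸ (hpos y hy).le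
  have hode := hf.ode x
  rw [hcrit] at hode
  nlinarith [mul_nonneg (sub_nonneg.mpr hx) hf'']

theorem isMinOn (hf : IsJacobiSolution α β μ f f' f'') (hαβ : β ≤ α) (hαβ₁ : 0 ≤ α + β + 1)
    (hμ : 0 < μ) {x₀ : ℝ} (hx₀ : x₀ ∈ Ico 0 1) (hcrit : f' x₀ = 0)
    (hpos : ∀ y ∈ Ioo x₀ 1, 0 < f' y) : IsMinOn f (Icc 0 1) x₀ := by
  refine isMinOn_iff.mpr fun u hu => ?_
  rcases le_or_gt u x₀ with hux | hxu
  · have hfx : f x₀ ≤ 0 := hf.nonpos_of_deriv_eq_zero hμ (by nlinarith [hx₀.1, hx₀.2])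
      hx₀.2 hcrit hpos
    have hsonin := hf.monotoneOn_sonin hαβ hαβ₁ hu.1 hx₀.1 hux
    simp only [hcrit] at hsonin
    have hsq : f u ^ 2 ≤ (-f x₀) ^ 2 := by
      nlinarith [mul_nonneg (by nlinarith [hu.1, hu.2] : 0 ≤ 1 - u ^ 2) (sq_nonneg (f' u))]
    simpa using (abs_le_of_sq_le_sq' hsq (neg_nonneg.mpr hfx)).1
  · have hmono : StrictMonoOn f (Icc x₀ 1) := by
      refine strictMonoOn_of_hasDerivWithinAt_pos (convex_Icc x₀ 1)
        (fun x _ => (hf.hasDerivAt x).continuousAt.continuousWithinAt)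
        (fun x _ => (hf.hasDerivAt x).hasDerivWithinAt) fun x hx => ?_
      rw [interior_Icc] at hx
      exact hpos x hx
    exact (hmono ⟨le_rfl, hx₀.2.le⟩ ⟨hxu.le, hu.2⟩ hxu).le

end IsJacobiSolution

noncomputable def jacobiWeight (α β x : ℝ) : ℝ := (1 - x) ^ α * (1 + x) ^ β

lemma jacobiWeight_pos (α β : ℝ) {x : ℝ} (hx : x ∈ Ioo (-1) 1) : 0 < jacobiWeight α β x :=
  mul_pos (rpow_pos_of_pos (by linarith [hx.2]) _)
    (rpow_pos_of_pos (by linarith [hx.1]) _)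

lemma hasDerivAt_jacobiWeight_mul (α β : ℝ) {x : ℝ} (hx : x ∈ Ioo (-1) 1) :
    HasDerivAt (fun t => jacobiWeight α β t * (1 - t ^ 2))
      (jacobiWeight α β x * (β - α - (α + β + 2) * x)) x := by
  have h₁ : 1 - x ≠ 0 := by linarith [hx.2]
  have h₂ : 1 + x ≠ 0 := by linarith [hx.1]
  have h := ((((hasDerivAt_id x).const_sub 1).rpow_const (p := α) (Or.inl h₁)).mul
    (((hasDerivAt_id x).const_add 1).rpow_const (p := β) (Or.inl h₂))).mul
    ((hasDerivAt_pow 2 x).const_sub 1)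
  refine h.congr_deriv ?_
  simp only [id, Pi.mul_apply, rpow_sub_one h₁, rpow_sub_one h₂, jacobiWeight]
  field_simp
  ring

lemma IsJacobiSolution.hasDerivAt_weight_mul_deriv {α β μ : ℝ} {f f' f'' : ℝ → ℝ}
    (hf : IsJacobiSolution α β μ f f' f'') {x : ℝ} (hx : x ∈ Ioo (-1) 1) :
    HasDerivAt (fun t => jacobiWeight α β t * (1 - t ^ 2) * f' t)
      (-(μ * jacobiWeight α β x * f x)) x := by
  refine ((hasDerivAt_jacobiWeight_mul α β hx).mul (hf.hasDerivAt_deriv x)).congr_deriv ?_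
  linear_combination jacobiWeight α β x * hf.ode x

section Sturm

-- `hcomp` says that `s = sin (ω (x - x₀))` satisfies `(p · (s²)')' + μ w s² > 0`.

variable {p dp w y dy : ℝ → ℝ} {x₀ ω μ : ℝ}

lemma not_forall_pos_of_sturm_comparison (hω : 0 < ω)
    (hy : ∀ x ∈ Icc x₀ (x₀ + π / ω), HasDerivAt y (dy x) x)
    (hp : ∀ x ∈ Icc x₀ (x₀ + π / ω), HasDerivAt p (dp x) x)
    (hpdy : ∀ x ∈ Icc x₀ (x₀ + π / ω), HasDerivAt (fun t => p t * dy t) (-(μ * w x * y x)) x)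
    (hcomp : ∀ x ∈ Ioo x₀ (x₀ + π / ω),
      0 < dp x * (2 * ω * sin (ω * (x - x₀)) * cos (ω * (x - x₀))) +
        p x * (2 * ω ^ 2 * (cos (ω * (x - x₀)) ^ 2 - sin (ω * (x - x₀)) ^ 2)) +
        μ * w x * sin (ω * (x - x₀)) ^ 2) :
    ¬ ∀ x ∈ Ioo x₀ (x₀ + π / ω), 0 < y x := by
  intro hpos
  have hθ (t : ℝ) : HasDerivAt (fun s => ω * (s - x₀)) ω t := by
    simpa using ((hasDerivAt_id t).sub_const x₀).const_mul ω
  -- Picone's function for `y` against `sin (ω (x - x₀))`: it vanishes at both endpoints, but its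
  -- derivative is `y` times the comparison expression, which is positive.
  set W : ℝ → ℝ := fun t => y t * (p t * (2 * ω * sin (ω * (t - x₀)) * cos (ω * (t - x₀)))) -
    p t * dy t * sin (ω * (t - x₀)) ^ 2
  have hW : ∀ x ∈ Icc x₀ (x₀ + π / ω), HasDerivAt W
      (y x * (dp x * (2 * ω * sin (ω * (x - x₀)) * cos (ω * (x - x₀))) +
        p x * (2 * ω ^ 2 * (cos (ω * (x - x₀)) ^ 2 - sin (ω * (x - x₀)) ^ 2)) +
        μ * w x * sin (ω * (x - x₀)) ^ 2)) x := by
    intro x hx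
    have hsin := (hasDerivAt_sin _).comp x (hθ x)
    have hcos := (hasDerivAt_cos _).comp x (hθ x)
    have h := ((hy x hx).mul ((hp x hx).mul ((hsin.const_mul (2 * ω)).mul hcos))).sub
      ((hpdy x hx).mul (hsin.pow 2))
    refine h.congr_deriv ?_
    simp only [Function.comp_apply, Pi.mul_apply, Pi.pow_apply]
    norm_num
    ring
  have hx₁ : x₀ < x₀ + π / ω := lt_add_of_pos_right x₀ (div_pos pi_pos hω)
  have hmono : StrictMonoOn W (Icc x₀ (x₀ + π / ω)) := by
    refine strictMonoOn_of_hasDerivWithinAt_pos (convex_Icc _ _)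
      (fun x hx => (hW x hx).continuousAt.continuousWithinAt)
      (fun x hx => (hW x (interior_subset hx)).hasDerivWithinAt) fun x hx => ?_
    rw [interior_Icc] at hx
    exact mul_pos (hpos x hx) (hcomp x hx)
  have hend := hmono (left_mem_Icc.mpr hx₁.le) (right_mem_Icc.mpr hx₁.le) hx₁
  have hπ : ω * (π / ω) = π := by field_simp
  simp [W, hπ] at hend

lemma exists_zero_of_sturm_comparison (hω : 0 < ω)
    (hy : ∀ x ∈ Icc x₀ (x₀ + π / ω), HasDerivAt y (dy x) x)
    (hp : ∀ x ∈ Icc x₀ (x₀ + π / ω), HasDerivAt p (dp x) x)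
    (hpdy : ∀ x ∈ Icc x₀ (x₀ + π / ω), HasDerivAt (fun t => p t * dy t) (-(μ * w x * y x)) x)
    (hcomp : ∀ x ∈ Ioo x₀ (x₀ + π / ω),
      0 < dp x * (2 * ω * sin (ω * (x - x₀)) * cos (ω * (x - x₀))) +
        p x * (2 * ω ^ 2 * (cos (ω * (x - x₀)) ^ 2 - sin (ω * (x - x₀)) ^ 2)) +
        μ * w x * sin (ω * (x - x₀)) ^ 2) :
    ∃ x ∈ Icc x₀ (x₀ + π / ω), y x = 0 := by
  by_contra! hne
  have hx₀ : x₀ ∈ Icc x₀ (x₀ + π / ω) := left_mem_Icc.mpr (le_add_of_nonneg_right (by positivity))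
  have hcont : ContinuousOn y (Icc x₀ (x₀ + π / ω)) :=
    fun x hx => (hy x hx).continuousAt.continuousWithinAt
  rcases (hne x₀ hx₀).lt_or_gt with hneg | hpos
  · refine not_forall_pos_of_sturm_comparison (y := fun t => -y t) (dy := fun t => -dy t) hω
      (fun x hx => (hy x hx).neg) hp (fun x hx => ?_) hcomp fun x hx => ?_
    · exact (((hpdy x hx).neg).congr_deriv (by ring)).congr_of_eventuallyEq
        (.of_forall fun t => mul_neg _ _)
    · exact isPreconnected_Icc.pos_of_ne_zero hcont.neg (fun x hx => neg_ne_zero.mpr (hne x hx))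
        hx₀ (neg_pos.mpr hneg) x (Ioo_subset_Icc_self hx)
  · exact not_forall_pos_of_sturm_comparison hω hy hp hpdy hcomp fun x hx =>
      isPreconnected_Icc.pos_of_ne_zero hcont hne hx₀ hpos x (Ioo_subset_Icc_self hx)

end Sturm

lemma sturm_comparison_pos {M ω μ D X s c : ℝ} (hD : |D| ≤ M) (hX : 3 / 4 ≤ X) (hX₁ : X ≤ 1)
    (hsc : s ^ 2 + c ^ 2 = 1) (hω : 4 * M < 3 * ω) (hμ : 4 * M * ω + 8 * ω ^ 2 < μ) :
    0 < D * (2 * ω * s * c) + X * (2 * ω ^ 2 * (c ^ 2 - s ^ 2)) + μ * s ^ 2 := by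
  have hM : 0 ≤ M := (abs_nonneg D).trans hD
  have hω₀ : 0 < ω := by linarith
  have hsc₁ : |2 * s * c| ≤ 1 := abs_le.mpr ⟨by nlinarith [sq_nonneg (s + c)],
    by nlinarith [sq_nonneg (s - c)]⟩
  have hDsc : -M ≤ D * (2 * s * c) := (abs_le.mp (((abs_mul D _).trans_le
    (mul_le_of_le_one_right (abs_nonneg D) hsc₁)).trans hD)).1
  have hDωsc : -(M * ω) ≤ D * (2 * ω * s * c) := by nlinarith
  have hω₂ : 0 ≤ 2 * ω ^ 2 := by positivity
  rcases le_or_gt (1 / 4) (s ^ 2) with hs | hs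
  · have hXcs : -1 ≤ X * (c ^ 2 - s ^ 2) := by nlinarith [sq_nonneg c]
    have := mul_le_mul_of_nonneg_left hXcs hω₂
    have := mul_le_mul_of_nonneg_left hs (by nlinarith : 0 ≤ μ)
    nlinarith
  · have hXcs : 3 / 8 ≤ X * (c ^ 2 - s ^ 2) := by nlinarith
    have := mul_le_mul_of_nonneg_left hXcs hω₂
    have := mul_pos hω₀ (by linarith : 0 < 3 * ω - 4 * M)
    nlinarith [mul_nonneg (by nlinarith : 0 ≤ μ) (sq_nonneg s)]

theorem exists_zero_of_isJacobiSolution (α β : ℝ) :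
    ∃ μ₀ : ℝ, ∀ μ > μ₀, ∀ f f' f'' : ℝ → ℝ, IsJacobiSolution α β μ f f' f'' →
      ∃ z ∈ Icc (1 / 4 : ℝ) (1 / 2), f z = 0 := by
  -- On `[1/4, 1/2]`, `|β - α - (α + β + 2) x| ≤ M` and `3/4 ≤ 1 - x² ≤ 1`; `ω ≥ 13 > 4π` puts
  -- the comparison interval `[1/4, 1/4 + π / ω]` inside it.
  set M := |β - α| + |α + β + 2|
  set ω := 2 * M + 13
  refine ⟨4 * M * ω + 8 * ω ^ 2, fun μ hμ f f' f'' hf => ?_⟩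
  have hM : 0 ≤ M := by positivity
  have hω : 0 < ω := by positivity
  have hπω : π / ω ≤ 1 / 4 := by
    rw [div_le_iff₀ hω]
    linarith [pi_lt_d2]
  have hsub : Icc (1 / 4) (1 / 4 + π / ω) ⊆ Icc (1 / 4 : ℝ) (1 / 2) :=
    Icc_subset_Icc le_rfl (by linarith)
  have hmem {x : ℝ} (hx : x ∈ Icc (1 / 4 : ℝ) (1 / 2)) : x ∈ Ioo (-1) 1 :=
    ⟨by linarith [hx.1], by linarith [hx.2]⟩
  have hcomp : ∀ x ∈ Ioo (1 / 4) (1 / 4 + π / ω),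
      0 < jacobiWeight α β x * (β - α - (α + β + 2) * x) *
          (2 * ω * sin (ω * (x - 1 / 4)) * cos (ω * (x - 1 / 4))) +
        jacobiWeight α β x * (1 - x ^ 2) *
          (2 * ω ^ 2 * (cos (ω * (x - 1 / 4)) ^ 2 - sin (ω * (x - 1 / 4)) ^ 2)) +
        μ * jacobiWeight α β x * sin (ω * (x - 1 / 4)) ^ 2 := by
    intro x hx
    have hx := hsub (Ioo_subset_Icc_self hx)
    have hD : |β - α - (α + β + 2) * x| ≤ M := by
      refine (abs_sub _ _).trans (add_le_add_right ?_ _)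
      rw [abs_mul]
      exact mul_le_of_le_one_right (abs_nonneg _)
        (abs_le.mpr ⟨by linarith [hx.1], by linarith [hx.2]⟩)
    have hpos := mul_pos (jacobiWeight_pos α β (hmem hx)) (sturm_comparison_pos hD
      (X := 1 - x ^ 2) (by nlinarith [hx.1, hx.2]) (by nlinarith)
      (sin_sq_add_cos_sq (ω * (x - 1 / 4))) (by linarith) hμ)
    linarith
  obtain ⟨z, hz, hfz⟩ := exists_zero_of_sturm_comparison hω (fun x _ => hf.hasDerivAt x)
    (fun x hx => hasDerivAt_jacobiWeight_mul α β (hmem (hsub hx)))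
    (fun x hx => hf.hasDerivAt_weight_mul_deriv (hmem (hsub hx))) hcomp
  exact ⟨z, hsub hz, hfz⟩

theorem exists_jacobiP_eq_zero (α β : ℝ) :
    ∃ N₀ : ℕ, ∀ N ≥ N₀, ∃ z ∈ Ioo (0 : ℝ) 1, jacobiP α β N z = 0 := by
  obtain ⟨μ₀, hμ₀⟩ := exists_zero_of_isJacobiSolution α β
  refine ⟨⌈μ₀⌉₊ + ⌈|α + β|⌉₊ + 2, fun N hN => ?_⟩
  obtain ⟨n, rfl⟩ : ∃ n, N = n + 2 := ⟨N - 2, by omega⟩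
  have hn₁ : μ₀ ≤ n := (Nat.le_ceil μ₀).trans (by exact_mod_cast (by omega : ⌈μ₀⌉₊ ≤ n))
  have hn₂ : |α + β| ≤ n :=
    (Nat.le_ceil _).trans (by exact_mod_cast (by omega : ⌈|α + β|⌉₊ ≤ n))
  have hμ : μ₀ < (n + 2) * (n + α + β + 3) := by
    nlinarith [neg_abs_le (α + β)]
  obtain ⟨z, hz, hfz⟩ := hμ₀ _ hμ _ _ _ (isJacobiSolution_jacobiP α β n)
  exact ⟨z, ⟨by linarith [hz.1], by linarith [hz.2]⟩, hfz⟩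

theorem jacobi_min_at_last_extremum
    (α β : ℝ) (hα : 0 ≤ α) (hβ : -1 < β) (hαβ : β ≤ α) :
    ∃ k₀ : ℕ, 2 ≤ k₀ ∧ ∀ k, k₀ ≤ k → ∀ xstar : ℝ,
      IsGreatest {y | y ∈ Set.Ioo (-1 : ℝ) 1 ∧ jacobiP (α + 1) (β + 1) (k - 1) y = 0}
        xstar →
      IsLeast (jacobiPN α β k '' Set.Icc (0 : ℝ) 1) (jacobiPN α β k xstar) := by
  obtain ⟨N₀, hN₀⟩ := exists_jacobiP_eq_zero (α + 1) (β + 1)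
  refine ⟨N₀ + 2, le_add_self, fun k hk xstar hxstar => ?_⟩
  obtain ⟨n, rfl⟩ : ∃ n, k = n + 2 := ⟨k - 2, by omega⟩
  obtain ⟨z, hz, hz_zero⟩ := hN₀ (n + 1) (by omega)
  have hx_pos : 0 < xstar :=
    hz.1.trans_le (hxstar.2 ⟨⟨by linarith [hz.1], hz.2⟩, hz_zero⟩)
  have hx_mem : xstar ∈ Icc (0 : ℝ) 1 := ⟨hx_pos.le, hxstar.1.1.2.le⟩
  have hQ_pos := pos_of_isGreatest_zeros (continuous_iff_continuousAt.mpr fun x =>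
      (hasDerivAt_jacobiP (α + 1) (β + 1) n x).continuousAt)
    (by rw [jacobiP_one]; exact genBinom_pos (by push_cast; linarith)) hxstar
  have hmin : IsMinOn (jacobiP α β (n + 2)) (Icc 0 1) xstar :=
    (isJacobiSolution_jacobiP α β n).isMinOn hαβ (by linarith) (mul_pos (by positivity)
      (by linarith)) ⟨hx_pos.le, hxstar.1.1.2⟩ (mul_eq_zero_of_right _ hxstar.1.2)
      fun y hy => mul_pos (by linarith [n.cast_nonneg (α := ℝ)]) (hQ_pos y hy)
  have hC : 0 < genBinom ((n + 2 : ℕ) + α) (n + 2) := genBinom_pos (by push_cast; linarith)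
  refine ⟨⟨xstar, hx_mem, rfl⟩, ?_⟩
  rintro _ ⟨u, hu, rfl⟩
  exact div_le_div_of_nonneg_right (isMinOn_iff.mp hmin u hu) hC.le
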